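/- Let R be an eDCTRS over a signature F. If the optimized unraveling U_opt is sound for R (for all s, t ∈ T(F,V), s →*_{U_opt(R)} t implies s →*_R t), then Ohlebusch's unraveling U is sound for R (for all s, t ∈ T(F,V), s →*_{U(R)} t implies s →*_R t); likewise, if U_opt is sound for R w.r.t. EV-safe reduction, then U is sound for R w.r.t. EV-safe reduction. -/

import Mathlib

set_option maxHeartbeats 1000000

universe u

/-! ## Terms -/

inductive Term (α : Type u) : Type u where
  | var : ℕ → Term α
  | app : α → List (Term α) → Term α

namespace Term

variable {α : Type u}

/-- The list of variable occurrences of a term (left-to-right). -/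
def varList : Term α → List ℕ
  | var x => [x]
  | app _ ts => ts.attach.foldr (fun t acc => varList t.1 ++ acc) []
decreasing_by
  simp only [Term.app.sizeOf_spec]
  have := List.sizeOf_lt_of_mem t.2
  omega

/-- The list of (function symbol, number of arguments) occurrences of a term. -/
def apps : Term α → List (α × ℕ)
  | var _ => []
  | app f ts => (f, ts.length) :: ts.attach.foldr (fun t acc => apps t.1 ++ acc) []
decreasing_by
  simp only [Term.app.sizeOf_spec]
  have := List.sizeOf_lt_of_mem t.2
  omega

/-- `Var(t)`: the set of variables of a term. -/
def varFinset (t : Term α) : Finset ℕ := t.varList.toFinset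

/-- All function symbols of the term belong to the signature `F`. -/
def overSig (F : Set α) (t : Term α) : Prop := ∀ p ∈ t.apps, p.1 ∈ F

/-- `t ∈ T(F,V)`: all function symbols belong to `F` and are applied
according to their arities. -/
def inT (F : Set α) (ar : α → ℕ) (t : Term α) : Prop :=
  ∀ p ∈ t.apps, p.1 ∈ F ∧ ar p.1 = p.2

/-- A term is linear if no variable occurs twice in it. -/
def Linear (t : Term α) : Prop := t.varList.Nodup

/-- A term is ground if it contains no variable. -/
def Ground (t : Term α) : Prop := t.varList = []

/-- Applying a substitution to a term. -/
def subst (σ : ℕ → Term α) : Term α → Term α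
  | var x => σ x
  | app f ts => app f (ts.attach.map (fun t => subst σ t.1))
decreasing_by
  simp only [Term.app.sizeOf_spec]
  have := List.sizeOf_lt_of_mem t.2
  omega

def isVar : Term α → Prop
  | var _ => True
  | app _ _ => False

def root? : Term α → Option α
  | var _ => none
  | app f _ => some f

def args : Term α → List (Term α)
  | var _ => []
  | app _ ts => ts

end Term

def junkPair {α : Type u} : Term α × Term α := (Term.var 0, Term.var 0)

/-! ## Conditional rewrite rules -/

/-- An extended (oriented) conditional rewrite rule `l → r ⇐ s₁ ↠ t₁; …; s_k ↠ t_k`,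
where `conds` is the list of pairs `(sᵢ, tᵢ)`. -/
structure ERule (α : Type u) : Type u where
  lhs : Term α
  rhs : Term α
  conds : List (Term α × Term α)

namespace ERule

variable {α : Type u}

def nonLV (ρ : ERule α) : Prop := ¬ ρ.lhs.isVar
def nonRV (ρ : ERule α) : Prop := ¬ ρ.rhs.isVar

/-- `X_{j+1} = Var(l, t_1, …, t_j)` (0-based index `j`). -/
def Xset (ρ : ERule α) (j : ℕ) : Finset ℕ :=
  ρ.lhs.varFinset ∪ ((ρ.conds.take j).map (fun c => c.2.varFinset)).foldr (· ∪ ·) ∅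

/-- `Y_{j+1} = Var(r, t_{j+1}, s_{j+2}, t_{j+2}, …, s_k, t_k)` (0-based index `j`). -/
def Yset (ρ : ERule α) (j : ℕ) : Finset ℕ :=
  ρ.rhs.varFinset ∪ (ρ.conds.getD j junkPair).2.varFinset ∪
    ((ρ.conds.drop (j+1)).map (fun c => c.1.varFinset ∪ c.2.varFinset)).foldr (· ∪ ·) ∅

/-- `Z_i = X_i ∩ Y_i`. -/
def Zset (ρ : ERule α) (j : ℕ) : Finset ℕ := ρ.Xset j ∩ ρ.Yset j

/-- Determinism: `Var(sᵢ) ⊆ Var(l, t₁, …, t_{i-1})`. -/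
def Det (ρ : ERule α) : Prop :=
  ∀ j < ρ.conds.length, (ρ.conds.getD j junkPair).1.varFinset ⊆ ρ.Xset j

/-- Type 3: `Var(r) ⊆ Var(l, s₁, t₁, …, s_k, t_k)`. -/
def Type3 (ρ : ERule α) : Prop :=
  ρ.rhs.varFinset ⊆
    ρ.lhs.varFinset ∪ ((ρ.conds.map (fun c => c.1.varFinset ∪ c.2.varFinset)).foldr (· ∪ ·) ∅)

/-- Left-linearity of a rule. -/
def LL (ρ : ERule α) : Prop := ρ.lhs.Linear
/-- Right-linearity of a rule. -/
def RL (ρ : ERule α) : Prop := ρ.rhs.Linear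
/-- Non-erasingness of a rule: `Var(l) ⊆ Var(r)`. -/
def NE (ρ : ERule α) : Prop := ρ.lhs.varFinset ⊆ ρ.rhs.varFinset

/-- `EVar(l → r) = Var(r) \\ Var(l)`, the extra variables of a rule. -/
def extraVars (ρ : ERule α) : Finset ℕ := ρ.rhs.varFinset \ ρ.lhs.varFinset

/-- The inverted rule `(l → r ⇐ s₁ ↠ t₁; …; s_k ↠ t_k)⁻¹ = r → l ⇐ t_k ↠ s_k; …; t₁ ↠ s₁`. -/
def inv (ρ : ERule α) : ERule α :=
  ⟨ρ.rhs, ρ.lhs, (ρ.conds.map (fun c => (c.2, c.1))).reverse⟩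

def allVarFinset (ρ : ERule α) : Finset ℕ :=
  ρ.lhs.varFinset ∪ ρ.rhs.varFinset ∪
    ((ρ.conds.map (fun c => c.1.varFinset ∪ c.2.varFinset)).foldr (· ∪ ·) ∅)

/-- A number strictly larger than every variable of the rule; used to pick fresh variables. -/
def freshBase (ρ : ERule α) : ℕ := ρ.allVarFinset.sup id + 1

/-- All terms of the rule use only symbols of `F`. -/
def overSig (F : Set α) (ρ : ERule α) : Prop :=
  ρ.lhs.overSig F ∧ ρ.rhs.overSig F ∧ ∀ c ∈ ρ.conds, c.1.overSig F ∧ c.2.overSig F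

/-- All terms of the rule are in `T(F,V)` (symbols of `F`, arity-correct). -/
def inT (F : Set α) (ar : α → ℕ) (ρ : ERule α) : Prop :=
  ρ.lhs.inT F ar ∧ ρ.rhs.inT F ar ∧ ∀ c ∈ ρ.conds, c.1.inT F ar ∧ c.2.inT F ar

end ERule

/-! ## Reduction relations -/

/-- One-hole contexts. -/
inductive Ctx (α : Type u) : Type u where
  | hole : Ctx α
  | app : α → List (Term α) → Ctx α → List (Term α) → Ctx α

def Ctx.plug {α : Type u} : Ctx α → Term α → Term α
  | .hole, t => t
  | .app f pre c post, t => .app f (pre ++ c.plug t :: post)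

/-- The approximations `→_{(n),R}` of the reduction relation of an oriented eCTRS. -/
def RedN {α : Type u} (R : Set (ERule α)) : ℕ → Term α → Term α → Prop
  | 0 => fun _ _ => False
  | n + 1 => fun s t =>
      RedN R n s t ∨
      ∃ ρ ∈ R, ∃ C : Ctx α, ∃ σ : ℕ → Term α,
        s = C.plug (ρ.lhs.subst σ) ∧ t = C.plug (ρ.rhs.subst σ) ∧
        ∀ c ∈ ρ.conds, Relation.ReflTransGen (RedN R n) (c.1.subst σ) (c.2.subst σ)

/-- The reduction relation `→_R` of an oriented eCTRS. -/
def Red {α : Type u} (R : Set (ERule α)) (s t : Term α) : Prop := ∃ n, RedN R n s t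

/-- `→*_R`. -/
def RedStar {α : Type u} (R : Set (ERule α)) : Term α → Term α → Prop :=
  Relation.ReflTransGen (Red R)

/-- The approximations of the reduction relation of a join CTRS
(conditions interpreted as joinability). -/
def JRedN {α : Type u} (R : Set (ERule α)) : ℕ → Term α → Term α → Prop
  | 0 => fun _ _ => False
  | n + 1 => fun s t =>
      JRedN R n s t ∨
      ∃ ρ ∈ R, ∃ C : Ctx α, ∃ σ : ℕ → Term α,
        s = C.plug (ρ.lhs.subst σ) ∧ t = C.plug (ρ.rhs.subst σ) ∧
        ∀ c ∈ ρ.conds, ∃ w, Relation.ReflTransGen (JRedN R n) (c.1.subst σ) w ∧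
          Relation.ReflTransGen (JRedN R n) (c.2.subst σ) w

/-- The reduction relation of a join CTRS. -/
def JRed {α : Type u} (R : Set (ERule α)) (s t : Term α) : Prop := ∃ n, JRedN R n s t

def JRedStar {α : Type u} (R : Set (ERule α)) : Term α → Term α → Prop :=
  Relation.ReflTransGen (JRed R)

/-- The underlying unconditional system `R_u`. -/
def Ru {α : Type u} (R : Set (ERule α)) : Set (ERule α) :=
  (fun ρ : ERule α => ⟨ρ.lhs, ρ.rhs, []⟩) '' R

/-- Normal form w.r.t. a system. -/
def IsNF {α : Type u} (R : Set (ERule α)) (t : Term α) : Prop := ∀ w, ¬ Red R t w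

/-! ## Unravelings for deterministic CTRSs -/

/-- The fixed-order sequence of a finite set of variables. -/
def seqOf (s : Finset ℕ) : List ℕ := s.sort (· ≤ ·)

/-- `U(t, x⃗)`: a U symbol applied to a term followed by a sequence of variables. -/
def mkU {α : Type u} (f : α) (t : Term α) (xs : List ℕ) : Term α :=
  .app f (t :: xs.map Term.var)

/-- Generic sequential unraveling of a single deterministic rule, where `carry j` is
the variable sequence carried by the `j`-th U symbol. -/
def unravelWith {α : Type u} (carry : ℕ → List ℕ) (u : ℕ → α) (ρ : ERule α) :
    List (ERule α) :=
  (List.range (ρ.conds.length + 1)).map (fun j =>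
    ⟨ if j = 0 then ρ.lhs else mkU (u (j-1)) (ρ.conds.getD (j-1) junkPair).2 (carry (j-1)),
      if j < ρ.conds.length then mkU (u j) (ρ.conds.getD j junkPair).1 (carry j) else ρ.rhs,
      [] ⟩)

/-- Ohlebusch's unraveling `U` of a single rule (carrying `X⃗ᵢ`). -/
def unravelU {α : Type u} (u : ℕ → α) (ρ : ERule α) : List (ERule α) :=
  unravelWith (fun j => seqOf (ρ.Xset j)) u ρ

/-- The optimized unraveling `U_opt` of a single rule (carrying `Z⃗ᵢ`). -/
def unravelOpt {α : Type u} (u : ℕ → α) (ρ : ERule α) : List (ERule α) :=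
  unravelWith (fun j => seqOf (ρ.Zset j)) u ρ

/-- `U(R)`. -/
def USys {α : Type u} (u : ERule α → ℕ → α) (R : Set (ERule α)) : Set (ERule α) :=
  { q | ∃ ρ ∈ R, q ∈ unravelU (u ρ) ρ }

/-- `U_opt(R)`. -/
def UoptSys {α : Type u} (u : ERule α → ℕ → α) (R : Set (ERule α)) : Set (ERule α) :=
  { q | ∃ ρ ∈ R, q ∈ unravelOpt (u ρ) ρ }

/-- The U symbols introduced for the rules of `R`. -/
def USymbols {α : Type u} (u : ERule α → ℕ → α) (R : Set (ERule α)) : Set α :=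
  { a | ∃ ρ ∈ R, ∃ i < ρ.conds.length, a = u ρ i }

/-- Freshness of the U symbols: they do not occur in `F` and are pairwise distinct. -/
def UFresh {α : Type u} (F : Set α) (u : ERule α → ℕ → α) (R : Set (ERule α)) : Prop :=
  (∀ ρ ∈ R, ∀ i < ρ.conds.length, u ρ i ∉ F) ∧
  (∀ ρ ∈ R, ∀ ρ' ∈ R, ∀ i < ρ.conds.length, ∀ j < ρ'.conds.length,
      u ρ i = u ρ' j → ρ = ρ' ∧ i = j)

/-! ## Positions, parallel reduction, EV-safe reduction -/

abbrev Pos := List ℕ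

/-- Subterm at a position. -/
def Term.sub? {α : Type u} : Pos → Term α → Option (Term α)
  | [], t => some t
  | _ :: _, .var _ => none
  | i :: p, .app _ ts => (ts[i]?).bind (Term.sub? p)

/-- Replacing the subterm at a position by `w`. -/
def Term.replaceAt {α : Type u} (w : Term α) : Pos → Term α → Term α
  | [], _ => w
  | _ :: _, .var x => .var x
  | i :: p, .app f ts =>
      .app f (ts.mapIdx (fun j s => if j = i then Term.replaceAt w p s else s))

/-- `Pos_F(t)`: non-variable positions of `t`. -/
def PosF {α : Type u} (t : Term α) : Set Pos :=
  { p | ∃ f ts, Term.sub? p t = some (Term.app f ts) }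

/-- `Pos_V(t)`: variable positions of `t`. -/
def PosV {α : Type u} (t : Term α) : Set Pos :=
  { p | ∃ x, Term.sub? p t = some (Term.var x) }

/-- One rewrite step of an eTRS at position `p`. -/
def RedAt {α : Type u} (R : Set (ERule α)) (p : Pos) (s t : Term α) : Prop :=
  ∃ ρ ∈ R, ρ.conds = [] ∧ ∃ σ : ℕ → Term α,
    Term.sub? p s = some (ρ.lhs.subst σ) ∧ t = Term.replaceAt (ρ.rhs.subst σ) p s

/-- Two positions are parallel. -/
def ParallelPos (p q : Pos) : Prop := ¬ p <+: q ∧ ¬ q <+: p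

/-- A sequence of single steps at the listed positions. -/
inductive RedSeqAt {α : Type u} (R : Set (ERule α)) : List Pos → Term α → Term α → Prop
  | nil (t : Term α) : RedSeqAt R [] t t
  | cons {ps s s' t} (p : Pos) : RedAt R p s s' → RedSeqAt R ps s' t →
      RedSeqAt R (p :: ps) s t

/-- One parallel rewrite step contracting the (pairwise parallel) positions in `P`. -/
def ParStep {α : Type u} (R : Set (ERule α)) (P : List Pos) (s t : Term α) : Prop :=
  P.Pairwise ParallelPos ∧ RedSeqAt R P s t

/-- The parallel reduction `⇉_R`. -/
def ParRed {α : Type u} (R : Set (ERule α)) (s t : Term α) : Prop :=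
  ∃ P, ParStep R P s t

/-- Parallel reduction where every contracted position is at or below a position of `Q`. -/
def ParRedBelow {α : Type u} (R : Set (ERule α)) (Q : Set Pos) (s t : Term α) : Prop :=
  ∃ P, ParStep R P s t ∧ ∀ p ∈ P, ∃ q ∈ Q, q <+: p

/-- `n`-fold composition of a relation. -/
def NFold {β : Type*} (r : β → β → Prop) : ℕ → β → β → Prop
  | 0 => Eq
  | n + 1 => fun a c => ∃ b, r a b ∧ NFold r n b c

/-- The update of the set of basic positions w.r.t. extra variables after a rewrite step
at position `p` with rule `l → r`. -/
def nextB {α : Type u} (B : Set Pos) (p : Pos) (l r : Term α) : Set Pos :=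
  { q | q ∈ B ∧ ¬ p <+: q }
  ∪ { q | ∃ q' ∈ PosF r, q = p ++ q' }
  ∪ { q | ∃ pv p' q', pv ∈ PosV l ∧ Term.sub? pv l = Term.sub? p' r ∧
        (p ++ pv ++ q') ∈ B ∧ q = p ++ p' ++ q' }

/-- Reduction sequences of an eTRS based on a set `B` of positions w.r.t. extra
variables, where additionally every term substituted for an extra variable of the
applied rule satisfies `T` (EV-instantiation on `T`). -/
inductive EVSeq {α : Type u} (R : Set (ERule α)) (T : Term α → Prop) :
    Set Pos → Term α → Term α → Prop
  | refl (B : Set Pos) (t : Term α) : EVSeq R T B t t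
  | step {B : Set Pos} {s s' t : Term α} (p : Pos) (ρ : ERule α) (σ : ℕ → Term α) :
      ρ ∈ R → ρ.conds = [] →
      Term.sub? p s = some (ρ.lhs.subst σ) →
      s' = Term.replaceAt (ρ.rhs.subst σ) p s →
      p ∈ B →
      (∀ x ∈ ρ.extraVars, T (σ x)) →
      EVSeq R T (nextB B p ρ.lhs ρ.rhs) s' t →
      EVSeq R T B s t

/-- An EV-safe reduction sequence `s ↪*_R t`, EV-instantiated on `T`. -/
def EVSafeI {α : Type u} (R : Set (ERule α)) (T : Term α → Prop) (s t : Term α) : Prop :=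
  EVSeq R T (PosF s) s t

/-- An EV-safe reduction sequence `s ↪*_R t`. -/
def EVSafe {α : Type u} (R : Set (ERule α)) (s t : Term α) : Prop :=
  EVSeq R (fun _ => True) (PosF s) s t

/-! ## Tree homomorphisms -/

/-- Applying the tree homomorphism determined by `h` to a term:
`φ(f(t₁, …, t_n)) = h(f){xᵢ ↦ φ(tᵢ)}` (the formal variable `xᵢ` is the variable `i - 1`). -/
def applyHom {α : Type u} (h : α → Term α) : Term α → Term α
  | .var x => .var x
  | .app f ts =>
      Term.subst (fun i => (ts.attach.map (fun s => applyHom h s.1)).getD i (Term.var i)) (h f)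
decreasing_by
  simp only [Term.app.sizeOf_spec]
  have := List.sizeOf_lt_of_mem s.2
  omega

/-- The image of a rule under a tree homomorphism. -/
def homRule {α : Type u} (h : α → Term α) (ρ : ERule α) : ERule α :=
  ⟨applyHom h ρ.lhs, applyHom h ρ.rhs,
    ρ.conds.map (fun c => (applyHom h c.1, applyHom h c.2))⟩

/-- The image of an eCTRS under a tree homomorphism. -/
def homSys {α : Type u} (h : α → Term α) (R : Set (ERule α)) : Set (ERule α) :=
  homRule h '' R

/-- `h` determines a tree homomorphism from `T(G₁,V)` to `T(G₂,V)` (w.r.t. arity `ar`):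
for `f ∈ G₁` of arity `n`, `h f` is a term over `G₂` with variables among `x₁, …, x_n`. -/
def TreeHom {α : Type u} (ar : α → ℕ) (G₁ G₂ : Set α) (h : α → Term α) : Prop :=
  ∀ f ∈ G₁, (h f).overSig G₂ ∧ ∀ x ∈ (h f).varList, x < ar f

/-- `F`-identical tree homomorphism. -/
def FIdentical {α : Type u} (ar : α → ℕ) (F : Set α) (h : α → Term α) : Prop :=
  ∀ f ∈ F, h f = Term.app f ((List.range (ar f)).map Term.var)

/-- Non-erasing tree homomorphism (on the signature `G`). -/
def HomNonErasing {α : Type u} (ar : α → ℕ) (G : Set α) (h : α → Term α) : Prop :=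
  ∀ f ∈ G, (h f).varFinset = Finset.range (ar f)

/-- The homomorphism is EV-preserving for the eTRS `S`. -/
def EVPreserving {α : Type u} (h : α → Term α) (S : Set (ERule α)) : Prop :=
  ∀ ρ ∈ S, (homRule h ρ).extraVars = ρ.extraVars

/-! ## Unravelings for join and normal CTRSs, and `Norm` -/

/-- Marchiori-style unraveling `U_J` of a join conditional rule. -/
def unravelJ {α : Type u} (uj : ERule α → α) (ρ : ERule α) : List (ERule α) :=
  if ρ.conds.isEmpty then [ρ]
  else
    [ ⟨ρ.lhs,
        Term.app (uj ρ) ((ρ.conds.foldr (fun c acc => c.1 :: c.2 :: acc) []) ++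
          (seqOf ρ.lhs.varFinset).map Term.var), []⟩,
      ⟨Term.app (uj ρ)
          (((List.range ρ.conds.length).foldr
              (fun j acc => Term.var (ρ.freshBase + j) :: Term.var (ρ.freshBase + j) :: acc) []) ++
            (seqOf ρ.lhs.varFinset).map Term.var),
        ρ.rhs, []⟩ ]

def UJSys {α : Type u} (uj : ERule α → α) (R : Set (ERule α)) : Set (ERule α) :=
  { q | ∃ ρ ∈ R, q ∈ unravelJ uj ρ }

/-- Unraveling `U_N` of a normal conditional rule. -/
def unravelN {α : Type u} (un : ERule α → α) (ρ : ERule α) : List (ERule α) :=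
  if ρ.conds.isEmpty then [ρ]
  else
    [ ⟨ρ.lhs,
        Term.app (un ρ) (ρ.conds.map Prod.fst ++ (seqOf ρ.lhs.varFinset).map Term.var), []⟩,
      ⟨Term.app (un ρ) (ρ.conds.map Prod.snd ++ (seqOf ρ.lhs.varFinset).map Term.var),
        ρ.rhs, []⟩ ]

def UNSys {α : Type u} (un : ERule α → α) (R : Set (ERule α)) : Set (ERule α) :=
  { q | ∃ ρ ∈ R, q ∈ unravelN un ρ }

/-- `Norm` on rules: `l → r ⇐ eq(s₁,t₁) ↠ eq(⊤,⊤); …; eq(s_k,t_k) ↠ eq(⊤,⊤)`. -/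
def normRule {α : Type u} (eqS topS : α) (ρ : ERule α) : ERule α :=
  ⟨ρ.lhs, ρ.rhs,
    ρ.conds.map (fun c =>
      (Term.app eqS [c.1, c.2], Term.app eqS [Term.app topS [], Term.app topS []]))⟩

/-- `Norm(R) = {eq(x,x) → eq(⊤,⊤)} ∪ {Norm(ρ) | ρ ∈ R}`. -/
def NormSys {α : Type u} (eqS topS : α) (R : Set (ERule α)) : Set (ERule α) :=
  insert
    ⟨Term.app eqS [Term.var 0, Term.var 0],
      Term.app eqS [Term.app topS [], Term.app topS []], []⟩
    (normRule eqS topS '' R)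

/-- A normal CTRS: a deterministic, non-LV CTRS all of whose condition right-hand
sides are ground normal forms w.r.t. `R_u`. -/
def NormalCTRS {α : Type u} (R : Set (ERule α)) : Prop :=
  ∀ ρ ∈ R, ρ.Det ∧ ρ.nonLV ∧ ∀ c ∈ ρ.conds, c.2.Ground ∧ IsNF (Ru R) c.2

/-!
Let `φ` be the tree homomorphism that deletes from every U symbol `U^ρ_i(t, X⃗ᵢ)` the carried
variables outside `Zᵢ`. It is the identity on `T(F,V)`, maps both sides of every rule of
`U(R)` onto the corresponding sides of the rule of `U_opt(R)`, and never deletes an occurrence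
in a left-hand side of a variable that the optimized right-hand side still uses. Hence a
`U(R)`-step `s → t` becomes `φ s →^= φ t` in `U_opt(R)` (the step vanishes when it happens
inside a deleted argument), and `φ` carries the basic positions of an EV-safe sequence along
with it. So every `U(R)`-reduction between terms of `T(F,V)` is a `U_opt(R)`-reduction of the
same kind, and soundness of `U_opt` transfers to `U`.
-/

namespace List

variable {β γ : Type*}

open Classical in
/-- Keeps the entries of `l` whose index, shifted by `n`, does not satisfy `P`. -/
noncomputable def keepIdx (P : ℕ → Prop) : ℕ → List β → List β
  | _, [] => []
  | n, a :: l => if P n then keepIdx P (n + 1) l else a :: keepIdx P (n + 1) l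

open Classical in
/-- The number of `k < i` with `¬ P (n + k)`: the index that entry `i` receives in
`keepIdx P n l` when it is kept. -/
noncomputable def keptBefore (P : ℕ → Prop) (n : ℕ) : ℕ → ℕ
  | 0 => 0
  | i + 1 => keptBefore P n i + if P (n + i) then 0 else 1

variable {P : ℕ → Prop} {n : ℕ}

@[simp]
theorem keepIdx_nil : keepIdx P n ([] : List β) = [] := rfl

theorem keepIdx_cons_of_pos {a : β} {l : List β} (h : P n) :
    keepIdx P n (a :: l) = keepIdx P (n + 1) l := by
  simp [keepIdx, h]

theorem keepIdx_cons_of_neg {a : β} {l : List β} (h : ¬ P n) :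
    keepIdx P n (a :: l) = a :: keepIdx P (n + 1) l := by
  simp [keepIdx, h]

theorem keepIdx_map (g : β → γ) (l : List β) :
    keepIdx P n (l.map g) = (keepIdx P n l).map g := by
  induction l generalizing n with
  | nil => rfl
  | cons a l ih =>
      by_cases h : P n
      · simp [keepIdx_cons_of_pos h, ih]
      · simp [keepIdx_cons_of_neg h, ih]

theorem keepIdx_append (l₁ l₂ : List β) :
    keepIdx P n (l₁ ++ l₂) = keepIdx P n l₁ ++ keepIdx P (n + l₁.length) l₂ := by
  induction l₁ generalizing n with
  | nil => simp
  | cons a l ih =>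
      have hn : n + 1 + l.length = n + (a :: l).length := by simp; omega
      by_cases h : P n
      · simp [keepIdx_cons_of_pos h, ih, hn]
      · simp [keepIdx_cons_of_neg h, ih, hn]

theorem keepIdx_of_forall_not (hP : ∀ i, ¬ P i) (l : List β) : keepIdx P n l = l := by
  induction l generalizing n with
  | nil => rfl
  | cons a l ih => rw [keepIdx_cons_of_neg (hP n), ih]

theorem keepIdx_eq_filter {l : List β} {q : β → Bool}
    (hq : ∀ i (hi : i < l.length), P (n + i) ↔ q l[i] = false) :
    keepIdx P n l = l.filter q := by
  induction l generalizing n with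
  | nil => rfl
  | cons a l ih =>
      have htail : ∀ i (hi : i < l.length), P (n + 1 + i) ↔ q l[i] = false := fun i hi => by
        have h := hq (i + 1) (by simpa using hi)
        rwa [List.getElem_cons_succ, ← Nat.add_assoc, Nat.add_right_comm] at h
      have hhead : P n ↔ q a = false := hq 0 (by simp)
      by_cases h : P n
      · rw [keepIdx_cons_of_pos h, filter_cons_of_neg (by simpa using hhead.1 h), ih htail]
      · rw [keepIdx_cons_of_neg h, filter_cons_of_pos (by simpa [hhead] using h), ih htail]

theorem keepIdx_set_of_pos (l : List β) {i : ℕ} (a : β) (h : P (n + i)) :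
    keepIdx P n (l.set i a) = keepIdx P n l := by
  induction l generalizing n i with
  | nil => rfl
  | cons b l ih =>
      cases i with
      | zero => rw [Nat.add_zero] at h; simp [keepIdx_cons_of_pos h]
      | succ i =>
          have h' : P (n + 1 + i) := by rwa [Nat.add_right_comm, Nat.add_assoc]
          by_cases hn : P n
          · simp [keepIdx_cons_of_pos hn, ih h']
          · simp [keepIdx_cons_of_neg hn, ih h']

theorem keptBefore_succ_of_pos {i : ℕ} (h : P n) :
    keptBefore P n (i + 1) = keptBefore P (n + 1) i := by
  induction i with
  | zero => simp [keptBefore, h]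
  | succ i ih =>
      rw [keptBefore, ih, keptBefore, Nat.add_right_comm n 1 i, Nat.add_assoc n i 1]

theorem keptBefore_succ_of_neg {i : ℕ} (h : ¬ P n) :
    keptBefore P n (i + 1) = keptBefore P (n + 1) i + 1 := by
  induction i with
  | zero => simp [keptBefore, h]
  | succ i ih =>
      rw [keptBefore, ih, keptBefore, Nat.add_right_comm n 1 i, Nat.add_assoc n i 1]
      omega

theorem keptBefore_mono : Monotone (keptBefore P n) :=
  monotone_nat_of_le_succ fun i => by rw [keptBefore]; omega

theorem keptBefore_lt {i j : ℕ} (hij : i < j) (hi : ¬ P (n + i)) :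
    keptBefore P n i < keptBefore P n j :=
  calc keptBefore P n i < keptBefore P n (i + 1) := by simp [keptBefore, hi]
    _ ≤ keptBefore P n j := keptBefore_mono hij

theorem eq_of_keptBefore_eq {i j : ℕ} (hi : ¬ P (n + i)) (hj : ¬ P (n + j))
    (h : keptBefore P n i = keptBefore P n j) : i = j := by
  rcases lt_trichotomy i j with hij | rfl | hij
  · exact absurd h (keptBefore_lt hij hi).ne
  · rfl
  · exact absurd h (keptBefore_lt hij hj).ne'

theorem getElem?_keepIdx (l : List β) {i : ℕ} (h : ¬ P (n + i)) :
    (keepIdx P n l)[keptBefore P n i]? = l[i]? := by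
  induction l generalizing n i with
  | nil => simp
  | cons a l ih =>
      cases i with
      | zero => rw [Nat.add_zero] at h; simp [keepIdx_cons_of_neg h, keptBefore]
      | succ i =>
          have h' : ¬ P (n + 1 + i) := by rwa [Nat.add_right_comm, Nat.add_assoc]
          by_cases hn : P n
          · simp [keepIdx_cons_of_pos hn, keptBefore_succ_of_pos hn, ih h']
          · simp [keepIdx_cons_of_neg hn, keptBefore_succ_of_neg hn, ih h']

theorem keepIdx_set_of_neg (l : List β) {i : ℕ} (a : β) (h : ¬ P (n + i)) :
    keepIdx P n (l.set i a) = (keepIdx P n l).set (keptBefore P n i) a := by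
  induction l generalizing n i with
  | nil => simp
  | cons b l ih =>
      cases i with
      | zero => rw [Nat.add_zero] at h; simp [keepIdx_cons_of_neg h, keptBefore]
      | succ i =>
          have h' : ¬ P (n + 1 + i) := by rwa [Nat.add_right_comm, Nat.add_assoc]
          by_cases hn : P n
          · simp [keepIdx_cons_of_pos hn, keptBefore_succ_of_pos hn, ih h']
          · simp [keepIdx_cons_of_neg hn, keptBefore_succ_of_neg hn, ih h']

end List

namespace Term

variable {α : Type u}

@[elab_as_elim]
theorem induction {motive : Term α → Prop} (hvar : ∀ x, motive (var x))
    (happ : ∀ f ts, (∀ t ∈ ts, motive t) → motive (app f ts)) : ∀ t, motive t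
  | var x => hvar x
  | app f ts => happ f ts fun t _ => induction hvar happ t
decreasing_by
  simp only [Term.app.sizeOf_spec]
  rename_i ht
  have := List.sizeOf_lt_of_mem ht
  omega

@[simp]
theorem subst_var (σ : ℕ → Term α) (x : ℕ) : (var x).subst σ = σ x := by
  rw [subst]

@[simp]
theorem subst_app (σ : ℕ → Term α) (f : α) (ts : List (Term α)) :
    (app f ts).subst σ = app f (ts.map (subst σ)) := by
  rw [subst, List.attach_map_val]

theorem apps_app (f : α) (ts : List (Term α)) :
    (app f ts).apps = (f, ts.length) :: (ts.map apps).flatten := by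
  rw [apps]
  simp

theorem overSig_app {F : Set α} {f : α} {ts : List (Term α)} :
    (app f ts).overSig F ↔ f ∈ F ∧ ∀ t ∈ ts, t.overSig F := by
  simp only [overSig, apps_app, List.mem_cons, List.mem_flatten, List.mem_map]
  constructor
  · intro h
    exact ⟨h _ (Or.inl rfl), fun t ht p hp => h p (Or.inr ⟨_, ⟨t, ht, rfl⟩, hp⟩)⟩
  · rintro ⟨hf, hts⟩ p (rfl | ⟨_, ⟨t, ht, rfl⟩, hp⟩)
    exacts [hf, hts t ht p hp]

@[simp]
theorem mem_varFinset_var {x y : ℕ} : x ∈ (var y : Term α).varFinset ↔ x = y := by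
  simp [varFinset, varList]

theorem mem_varFinset_app {x : ℕ} {f : α} {ts : List (Term α)} :
    x ∈ (app f ts).varFinset ↔ ∃ t ∈ ts, x ∈ t.varFinset := by
  rw [varFinset, varList]
  simp [varFinset]

theorem sub?_cons_eq_some {i : ℕ} {p : Pos} {t v : Term α} :
    sub? (i :: p) t = some v ↔
      ∃ f ts c, t = app f ts ∧ ts[i]? = some c ∧ sub? p c = some v := by
  cases t with
  | var x => simp [sub?]
  | app f ts => simp [sub?, Option.bind_eq_some_iff]

theorem sub?_subst {σ : ℕ → Term α} {p : Pos} {t v : Term α} (h : sub? p t = some v) :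
    sub? p (t.subst σ) = some (v.subst σ) := by
  induction p generalizing t with
  | nil => cases h; rfl
  | cons i p ih =>
      obtain ⟨f, ts, c, rfl, hc, h⟩ := sub?_cons_eq_some.1 h
      simp [sub?, hc, ih h]

theorem mem_varFinset_of_sub? {x : ℕ} {p : Pos} {t : Term α} (h : sub? p t = some (var x)) :
    x ∈ t.varFinset := by
  induction p generalizing t with
  | nil => cases h; simp
  | cons i p ih =>
      obtain ⟨f, ts, c, rfl, hc, h⟩ := sub?_cons_eq_some.1 h
      exact mem_varFinset_app.2 ⟨c, List.mem_of_getElem? hc, ih h⟩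

theorem replaceAt_cons_app {w c : Term α} {i : ℕ} {p : Pos} {f : α} {ts : List (Term α)}
    (hc : ts[i]? = some c) :
    replaceAt w (i :: p) (app f ts) = app f (ts.set i (replaceAt w p c)) := by
  rw [replaceAt]
  congr 1
  apply List.ext_getElem?
  intro j
  rw [List.getElem?_mapIdx, List.getElem?_set]
  by_cases hj : j = i
  · subst hj
    obtain ⟨hj, rfl⟩ := List.getElem?_eq_some_iff.1 hc
    simp [hj]
  · simp [hj, Ne.symm hj]

theorem sub?_replaceAt_self (w : Term α) {p : Pos} {t v : Term α} (h : sub? p t = some v) :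
    sub? p (replaceAt w p t) = some w := by
  induction p generalizing t with
  | nil => rfl
  | cons i p ih =>
      obtain ⟨f, ts, c, rfl, hc, h⟩ := sub?_cons_eq_some.1 h
      have hi : i < ts.length := (List.getElem?_eq_some_iff.1 hc).1
      simp [replaceAt_cons_app hc, sub?, hi, ih h]

section Erasure

variable (D : α → ℕ → Prop)

noncomputable def eraseArgs : Term α → Term α
  | var x => var x
  | app f ts => app f ((ts.attach.map fun t => eraseArgs t.1).keepIdx (D f) 0)
decreasing_by
  simp only [Term.app.sizeOf_spec]
  have := List.sizeOf_lt_of_mem t.2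
  omega

def KeptPos : Pos → Term α → Prop
  | [], _ => True
  | _ :: _, var _ => False
  | i :: p, app f ts => ¬ D f i ∧ ∃ c, ts[i]? = some c ∧ KeptPos p c

noncomputable def erasePos : Pos → Term α → Pos
  | [], _ => []
  | _ :: _, var _ => []
  | i :: p, app f ts => List.keptBefore (D f) 0 i :: erasePos p (ts.getD i (var 0))

end Erasure

variable {D : α → ℕ → Prop}

@[simp]
theorem eraseArgs_var (x : ℕ) : eraseArgs D (var x : Term α) = var x := by
  rw [eraseArgs]

theorem eraseArgs_app (f : α) (ts : List (Term α)) :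
    eraseArgs D (app f ts) = app f ((ts.map (eraseArgs D)).keepIdx (D f) 0) := by
  rw [eraseArgs, List.attach_map_val]

theorem keptPos_cons_app {i : ℕ} {p : Pos} {f : α} {ts : List (Term α)} :
    KeptPos D (i :: p) (app f ts) ↔ ¬ D f i ∧ ∃ c, ts[i]? = some c ∧ KeptPos D p c :=
  Iff.rfl

theorem erasePos_cons_app {i : ℕ} {p : Pos} {f : α} {ts : List (Term α)} {c : Term α}
    (hc : ts[i]? = some c) :
    erasePos D (i :: p) (app f ts) = List.keptBefore (D f) 0 i :: erasePos D p c := by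
  simp [erasePos, List.getD_eq_getElem?_getD, hc]

theorem eraseArgs_subst (σ : ℕ → Term α) (t : Term α) :
    eraseArgs D (t.subst σ) = (eraseArgs D t).subst fun x => eraseArgs D (σ x) := by
  induction t using Term.induction with
  | hvar x => simp
  | happ f ts ih =>
      simp only [subst_app, eraseArgs_app, List.map_map, ← List.keepIdx_map]
      congr 2
      exact List.map_congr_left fun t ht => ih t ht

theorem keptPos_subst_iff (σ : ℕ → Term α) {p : Pos} {t v : Term α} (h : sub? p t = some v) :
    KeptPos D p (t.subst σ) ↔ KeptPos D p t := by
  induction p generalizing t with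
  | nil => exact Iff.rfl
  | cons i p ih =>
      obtain ⟨f, ts, c, rfl, hc, h⟩ := sub?_cons_eq_some.1 h
      simp [keptPos_cons_app, hc, ih h]

theorem erasePos_subst (σ : ℕ → Term α) {p : Pos} {t v : Term α} (h : sub? p t = some v) :
    erasePos D p (t.subst σ) = erasePos D p t := by
  induction p generalizing t with
  | nil => rfl
  | cons i p ih =>
      obtain ⟨f, ts, c, rfl, hc, h⟩ := sub?_cons_eq_some.1 h
      have hc' : (ts.map (subst σ))[i]? = some (c.subst σ) := by simp [hc]
      rw [subst_app, erasePos_cons_app hc', erasePos_cons_app hc, ih h]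

theorem sub?_erasePos {p : Pos} {t v : Term α} (hp : KeptPos D p t) (h : sub? p t = some v) :
    sub? (erasePos D p t) (eraseArgs D t) = some (eraseArgs D v) := by
  induction p generalizing t with
  | nil => cases h; rfl
  | cons i p ih =>
      obtain ⟨f, ts, c, rfl, hc, h⟩ := sub?_cons_eq_some.1 h
      obtain ⟨hi, _, hc', hp⟩ := keptPos_cons_app.1 hp
      cases hc.symm.trans hc'
      have hkeep :=
        List.getElem?_keepIdx (P := D f) (n := 0) (ts.map (eraseArgs D)) (by simpa using hi)
      rw [erasePos_cons_app hc, eraseArgs_app, sub?, hkeep, List.getElem?_map, hc]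
      exact ih hp h

theorem erasePos_mem_PosF {p : Pos} {t : Term α} (hp : KeptPos D p t) (h : p ∈ PosF t) :
    erasePos D p t ∈ PosF (eraseArgs D t) := by
  obtain ⟨f, ts, h⟩ := h
  rw [PosF, Set.mem_ofPred_eq, sub?_erasePos hp h, eraseArgs_app]
  exact ⟨_, _, rfl⟩

theorem eraseArgs_replaceAt_of_keptPos (w : Term α) {p : Pos} {t v : Term α}
    (hp : KeptPos D p t) (h : sub? p t = some v) :
    eraseArgs D (replaceAt w p t) = replaceAt (eraseArgs D w) (erasePos D p t) (eraseArgs D t) := by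
  induction p generalizing t with
  | nil => rfl
  | cons i p ih =>
      obtain ⟨f, ts, c, rfl, hc, h⟩ := sub?_cons_eq_some.1 h
      obtain ⟨hi, _, hc', hp⟩ := keptPos_cons_app.1 hp
      cases hc.symm.trans hc'
      have hkeep :=
        List.getElem?_keepIdx (P := D f) (n := 0) (ts.map (eraseArgs D)) (by simpa using hi)
      simp only [List.getElem?_map, hc, Option.map_some] at hkeep
      rw [replaceAt_cons_app hc, erasePos_cons_app hc, eraseArgs_app, eraseArgs_app,
        replaceAt_cons_app hkeep, List.map_set, List.keepIdx_set_of_neg _ _ (by simpa using hi),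
        ih hp h]

theorem eraseArgs_replaceAt_of_not_keptPos (w : Term α) {p : Pos} {t v : Term α}
    (hp : ¬ KeptPos D p t) (h : sub? p t = some v) :
    eraseArgs D (replaceAt w p t) = eraseArgs D t := by
  induction p generalizing t with
  | nil => exact absurd trivial hp
  | cons i p ih =>
      obtain ⟨f, ts, c, rfl, hc, h⟩ := sub?_cons_eq_some.1 h
      rw [replaceAt_cons_app hc, eraseArgs_app, eraseArgs_app]
      by_cases hi : D f i
      · rw [List.map_set, List.keepIdx_set_of_pos _ _ (by simpa using hi)]
      · have hp' : ¬ KeptPos D p c := fun hp' => hp ⟨hi, c, hc, hp'⟩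
        obtain ⟨hlt, rfl⟩ := List.getElem?_eq_some_iff.1 hc
        rw [List.map_set, ih hp' h,
          ← List.getElem_map (f := eraseArgs D) (h := by simpa using hlt), List.set_getElem_self]

theorem keptPos_append_iff {p q : Pos} {t v : Term α} (h : sub? p t = some v) :
    KeptPos D (p ++ q) t ↔ KeptPos D p t ∧ KeptPos D q v := by
  induction p generalizing t with
  | nil => cases h; simp [KeptPos]
  | cons i p ih =>
      obtain ⟨f, ts, c, rfl, hc, h⟩ := sub?_cons_eq_some.1 h
      simp [List.cons_append, keptPos_cons_app, hc, ih h, and_assoc]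

theorem erasePos_append {p q : Pos} {t v : Term α} (h : sub? p t = some v) :
    erasePos D (p ++ q) t = erasePos D p t ++ erasePos D q v := by
  induction p generalizing t with
  | nil => cases h; rfl
  | cons i p ih =>
      obtain ⟨f, ts, c, rfl, hc, h⟩ := sub?_cons_eq_some.1 h
      rw [List.cons_append, erasePos_cons_app hc, erasePos_cons_app hc, ih h, List.cons_append]

theorem erasePos_not_prefix {p q : Pos} {t : Term α} (hp : KeptPos D p t) (hq : KeptPos D q t)
    (hpq : ¬ p <+: q) : ¬ erasePos D p t <+: erasePos D q t := by
  induction p generalizing q t with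
  | nil => exact absurd List.nil_prefix hpq
  | cons i p ih =>
      cases t with
      | var x => exact hp.elim
      | app f ts =>
          obtain ⟨hi, c, hc, hp⟩ := keptPos_cons_app.1 hp
          cases q with
          | nil => simp [erasePos]
          | cons j q =>
              obtain ⟨hj, c', hc', hq⟩ := keptPos_cons_app.1 hq
              rw [erasePos_cons_app hc, erasePos_cons_app hc', List.cons_prefix_cons]
              rintro ⟨hij, hpre⟩
              obtain rfl := List.eq_of_keptBefore_eq (by simpa using hi) (by simpa using hj) hij
              cases hc.symm.trans hc'
              exact ih hp hq (fun h => hpq (List.cons_prefix_cons.2 ⟨rfl, h⟩)) hpre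

theorem keptPos_replaceAt_iff (w : Term α) {p q : Pos} {t v : Term α} (hpq : p <+: q → p = q)
    (h : sub? p t = some v) : KeptPos D q (replaceAt w p t) ↔ KeptPos D q t := by
  induction q generalizing p t with
  | nil => exact Iff.rfl
  | cons j q ih =>
      cases p with
      | nil => exact absurd (hpq List.nil_prefix) (List.cons_ne_nil _ _).symm
      | cons i p =>
          obtain ⟨f, ts, c, rfl, hc, h⟩ := sub?_cons_eq_some.1 h
          have hi : i < ts.length := (List.getElem?_eq_some_iff.1 hc).1
          rw [replaceAt_cons_app hc, keptPos_cons_app, keptPos_cons_app]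
          by_cases hij : i = j
          · subst hij
            have hpq' : p <+: q → p = q := fun hpre =>
              List.cons_injective (hpq (List.cons_prefix_cons.2 ⟨rfl, hpre⟩))
            simp [List.getElem?_set_self hi, hc, ih hpq' h]
          · rw [List.getElem?_set_ne hij]

theorem erasePos_replaceAt (w : Term α) {p q : Pos} {t v : Term α} (hpq : p <+: q → p = q)
    (h : sub? p t = some v) : erasePos D q (replaceAt w p t) = erasePos D q t := by
  induction q generalizing p t with
  | nil => rfl
  | cons j q ih =>
      cases p with
      | nil => exact absurd (hpq List.nil_prefix) (List.cons_ne_nil _ _).symm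
      | cons i p =>
          obtain ⟨f, ts, c, rfl, hc, h⟩ := sub?_cons_eq_some.1 h
          have hi : i < ts.length := (List.getElem?_eq_some_iff.1 hc).1
          rw [replaceAt_cons_app hc]
          by_cases hij : i = j
          · subst hij
            have hpq' : p <+: q → p = q := fun hpre =>
              List.cons_injective (hpq (List.cons_prefix_cons.2 ⟨rfl, hpre⟩))
            rw [erasePos_cons_app (List.getElem?_set_self hi), erasePos_cons_app hc, ih hpq' h]
          · simp only [erasePos, List.getD_eq_getElem?_getD, List.getElem?_set_ne hij]

theorem eraseArgs_eq_self {F : Set α} (hF : ∀ f ∈ F, ∀ i, ¬ D f i) {t : Term α}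
    (ht : t.overSig F) : eraseArgs D t = t := by
  induction t using Term.induction with
  | hvar x => exact eraseArgs_var x
  | happ f ts ih =>
      obtain ⟨hf, hts⟩ := overSig_app.1 ht
      rw [eraseArgs_app, List.keepIdx_of_forall_not (hF f hf)]
      exact congrArg _ ((List.map_congr_left fun t h => ih t h (hts t h)).trans (List.map_id' ts))

theorem keptPos_of_overSig {F : Set α} (hF : ∀ f ∈ F, ∀ i, ¬ D f i) {p : Pos}
    {t v : Term α} (ht : t.overSig F) (h : sub? p t = some v) : KeptPos D p t := by
  induction p generalizing t with
  | nil => trivial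
  | cons i p ih =>
      obtain ⟨f, ts, c, rfl, hc, h⟩ := sub?_cons_eq_some.1 h
      obtain ⟨hf, hts⟩ := overSig_app.1 ht
      exact ⟨hF f hf i, c, hc, ih (hts c (List.mem_of_getElem? hc)) h⟩

end Term

theorem Ctx.plug_app {α : Type u} (f : α) (pre post : List (Term α)) (C : Ctx α) (w : Term α) :
    (Ctx.app f pre C post).plug w = Term.app f (pre ++ C.plug w :: post) := rfl

theorem Term.eraseArgs_plug {α : Type u} {D : α → ℕ → Prop} (C : Ctx α) :
    (∃ C' : Ctx α, ∀ w, eraseArgs D (C.plug w) = C'.plug (eraseArgs D w)) ∨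
      ∀ w w', eraseArgs D (C.plug w) = eraseArgs D (C.plug w') := by
  induction C with
  | hole => exact Or.inl ⟨Ctx.hole, fun w => rfl⟩
  | app f pre C post ih =>
      have hplug : ∀ w, eraseArgs D ((Ctx.app f pre C post).plug w) =
          app f ((pre.map (eraseArgs D)).keepIdx (D f) 0 ++
            (eraseArgs D (C.plug w) :: post.map (eraseArgs D)).keepIdx (D f) pre.length) := by
        intro w
        rw [Ctx.plug_app, eraseArgs_app, List.map_append, List.map_cons, List.keepIdx_append,
          List.length_map, Nat.zero_add]
      by_cases hd : D f pre.length
      · refine Or.inr fun w w' => ?_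
        rw [hplug, hplug, List.keepIdx_cons_of_pos hd, List.keepIdx_cons_of_pos hd]
      · rcases ih with ⟨C', hC'⟩ | hconst
        · refine Or.inl ⟨Ctx.app f ((pre.map (eraseArgs D)).keepIdx (D f) 0) C'
            ((post.map (eraseArgs D)).keepIdx (D f) (pre.length + 1)), fun w => ?_⟩
          rw [hplug, List.keepIdx_cons_of_neg hd, hC', Ctx.plug_app]
        · refine Or.inr fun w w' => ?_
          rw [hplug, hplug, hconst w w']

section Simulation

open Term

variable {α : Type u} {D : α → ℕ → Prop}

theorem Red.exists_rule {S : Set (ERule α)} {s t : Term α} (h : Red S s t) :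
    ∃ ρ ∈ S, ∃ (C : Ctx α) (σ : ℕ → Term α),
      s = C.plug (ρ.lhs.subst σ) ∧ t = C.plug (ρ.rhs.subst σ) := by
  obtain ⟨n, hn⟩ := h
  induction n with
  | zero => exact hn.elim
  | succ n ih =>
      rcases hn with hn | ⟨ρ, hρ, C, σ, hs, ht, -⟩
      exacts [ih hn, ⟨ρ, hρ, C, σ, hs, ht⟩]

theorem Red.of_unconditional {S : Set (ERule α)} {ρ : ERule α} (hρ : ρ ∈ S)
    (hc : ρ.conds = []) (C : Ctx α) (σ : ℕ → Term α) :
    Red S (C.plug (ρ.lhs.subst σ)) (C.plug (ρ.rhs.subst σ)) :=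
  ⟨1, Or.inr ⟨ρ, hρ, C, σ, rfl, rfl, by simp [hc]⟩⟩

/-- The last clause is what lets erasure preserve EV-safety. -/
def ErasureSimulates (D : α → ℕ → Prop) (S S' : Set (ERule α)) : Prop :=
  ∀ ρ ∈ S, ∃ ρ' ∈ S', ρ'.conds = [] ∧ eraseArgs D ρ.lhs = ρ'.lhs ∧
    eraseArgs D ρ.rhs = ρ'.rhs ∧
    ∀ q x, sub? q ρ.lhs = some (var x) → x ∈ ρ'.rhs.varFinset → KeptPos D q ρ.lhs

variable {S S' : Set (ERule α)}

theorem ErasureSimulates.reflTransGen_red (hsim : ErasureSimulates D S S') {s t : Term α}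
    (h : Red S s t) : Relation.ReflTransGen (Red S') (eraseArgs D s) (eraseArgs D t) := by
  obtain ⟨ρ, hρ, C, σ, rfl, rfl⟩ := h.exists_rule
  obtain ⟨ρ', hρ', hc, hl, hr, -⟩ := hsim ρ hρ
  rcases eraseArgs_plug (D := D) C with ⟨C', hC'⟩ | hconst
  · rw [hC', hC', eraseArgs_subst, eraseArgs_subst, hl, hr]
    exact .single (.of_unconditional hρ' hc C' _)
  · rw [hconst _ (ρ.rhs.subst σ)]

theorem ErasureSimulates.redStar (hsim : ErasureSimulates D S S') {s t : Term α}
    (h : RedStar S s t) : RedStar S' (eraseArgs D s) (eraseArgs D t) := by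
  induction h with
  | refl => exact .refl
  | tail _ hstep ih => exact ih.trans (hsim.reflTransGen_red hstep)

theorem mapsTo_nextB_of_keptPos {l r l' r' : Term α} (hl : eraseArgs D l = l')
    (hr : eraseArgs D r = r')
    (hvar : ∀ q x, sub? q l = some (var x) → x ∈ r'.varFinset → KeptPos D q l)
    {B B' : Set Pos} {s : Term α} {p : Pos} {σ : ℕ → Term α}
    (hB : Set.MapsTo (erasePos D · s) (B ∩ {q | KeptPos D q s}) B')
    (hp : KeptPos D p s) (hsub : sub? p s = some (l.subst σ)) :
    Set.MapsTo (erasePos D · (replaceAt (r.subst σ) p s))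
      (nextB B p l r ∩ {q | KeptPos D q (replaceAt (r.subst σ) p s)})
      (nextB B' (erasePos D p s) l' r') := by
  have hsub' := sub?_replaceAt_self (r.subst σ) hsub
  have hpos : erasePos D p (replaceAt (r.subst σ) p s) = erasePos D p s :=
    erasePos_replaceAt _ (fun _ => rfl) hsub
  rintro q ⟨(⟨hqB, hpq⟩ | ⟨q', ⟨g, ts, hrq'⟩, rfl⟩) |
    ⟨pv, p', q', ⟨x, hlpv⟩, hpp', hB', rfl⟩, hq⟩
  · have hpq' : p <+: q → p = q := fun h => absurd h hpq
    rw [Set.mem_ofPred_eq, keptPos_replaceAt_iff _ hpq' hsub] at hq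
    simp only [erasePos_replaceAt _ hpq' hsub]
    exact Or.inl (Or.inl ⟨hB ⟨hqB, hq⟩, erasePos_not_prefix hp hq hpq⟩)
  · obtain ⟨-, hq'⟩ := (keptPos_append_iff hsub').1 hq
    rw [keptPos_subst_iff σ hrq'] at hq'
    refine Or.inl (Or.inr ⟨erasePos D q' r, hr ▸ erasePos_mem_PosF hq' ⟨g, ts, hrq'⟩, ?_⟩)
    simp only [erasePos_append hsub', hpos, erasePos_subst σ hrq']
  · have hrp' : sub? p' r = some (var x) := hpp' ▸ hlpv
    have hσp' : sub? p' (r.subst σ) = some (σ x) := by simpa using sub?_subst (σ := σ) hrp'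
    have hσpv : sub? pv (l.subst σ) = some (σ x) := by simpa using sub?_subst (σ := σ) hlpv
    rw [Set.mem_ofPred_eq, List.append_assoc, keptPos_append_iff hsub',
      keptPos_append_iff hσp', keptPos_subst_iff σ hrp'] at hq
    obtain ⟨-, hp', hq'⟩ := hq
    have hx : x ∈ r'.varFinset := by
      have := sub?_erasePos hp' hrp'
      rw [hr, eraseArgs_var] at this
      exact mem_varFinset_of_sub? this
    -- `x` survives in `r'`, so its occurrence `pv` in `l` is kept and `p ++ pv ++ q'` is
    -- a kept position of `s` tracked by `B`
    have hpv := hvar pv x hlpv hx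
    have hkept : KeptPos D (p ++ (pv ++ q')) s := by
      rw [keptPos_append_iff hsub, keptPos_append_iff hσpv, keptPos_subst_iff σ hlpv]
      exact ⟨hp, hpv, hq'⟩
    have himage := hB ⟨List.append_assoc .. ▸ hB', hkept⟩
    simp only [erasePos_append hsub, erasePos_append hσpv, erasePos_subst σ hlpv] at himage
    refine Or.inr ⟨erasePos D pv l, erasePos D p' r, erasePos D q' (σ x), ?_, ?_, ?_, ?_⟩
    · exact ⟨x, by simpa [hl] using sub?_erasePos hpv hlpv⟩
    · simpa [← hl, ← hr] using (sub?_erasePos hpv hlpv).trans (sub?_erasePos hp' hrp').symm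
    · simpa using himage
    · simp only [List.append_assoc, erasePos_append hsub', hpos, erasePos_append hσp',
        erasePos_subst σ hrp']

theorem mapsTo_nextB_of_not_keptPos {l r : Term α} (w : Term α) {B B' : Set Pos} {s v : Term α}
    {p : Pos} (hB : Set.MapsTo (erasePos D · s) (B ∩ {q | KeptPos D q s}) B')
    (hp : ¬ KeptPos D p s) (hsub : sub? p s = some v) :
    Set.MapsTo (erasePos D · (replaceAt w p s))
      (nextB B p l r ∩ {q | KeptPos D q (replaceAt w p s)}) B' := by
  have hsub' := sub?_replaceAt_self w hsub
  have hp' : ¬ KeptPos D p (replaceAt w p s) := by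
    rwa [keptPos_replaceAt_iff w (fun _ => rfl) hsub]
  rintro q ⟨(⟨hqB, hpq⟩ | ⟨q', -, rfl⟩) | ⟨pv, p', q', -, -, -, rfl⟩, hq⟩
  · have hpq' : p <+: q → p = q := fun h => absurd h hpq
    rw [Set.mem_ofPred_eq, keptPos_replaceAt_iff _ hpq' hsub] at hq
    simpa only [erasePos_replaceAt _ hpq' hsub] using hB ⟨hqB, hq⟩
  · exact absurd ((keptPos_append_iff hsub').1 hq).1 hp'
  · rw [Set.mem_ofPred_eq, List.append_assoc] at hq
    exact absurd ((keptPos_append_iff hsub').1 hq).1 hp'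

theorem ErasureSimulates.evSeq (hsim : ErasureSimulates D S S') {T : Term α → Prop}
    {B B' : Set Pos} {s t : Term α} (h : EVSeq S T B s t)
    (hB : Set.MapsTo (erasePos D · s) (B ∩ {q | KeptPos D q s}) B') :
    EVSeq S' (fun _ => True) B' (eraseArgs D s) (eraseArgs D t) := by
  induction h generalizing B' with
  | refl => exact .refl _ _
  | @step B s _ _ p ρ σ hρ _ hsub hs' hpB _ _ ih =>
      subst hs'
      obtain ⟨ρ', hρ', hc, hl, hr, hvar⟩ := hsim ρ hρ
      by_cases hp : KeptPos D p s
      · refine .step (erasePos D p s) ρ' (fun x => eraseArgs D (σ x)) hρ' hc ?_ ?_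
          (hB ⟨hpB, hp⟩) (fun _ _ => trivial)
          (ih (mapsTo_nextB_of_keptPos hl hr hvar hB hp hsub))
        · rw [← hl, ← eraseArgs_subst]
          exact sub?_erasePos hp hsub
        · rw [eraseArgs_replaceAt_of_keptPos _ hp hsub, eraseArgs_subst, hr]
      · rw [← eraseArgs_replaceAt_of_not_keptPos (ρ.rhs.subst σ) hp hsub]
        exact ih (mapsTo_nextB_of_not_keptPos _ hB hp hsub)

theorem ErasureSimulates.evSafe (hsim : ErasureSimulates D S S') {s t : Term α}
    (h : EVSafe S s t) : EVSafe S' (eraseArgs D s) (eraseArgs D t) :=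
  hsim.evSeq h fun _ hq => erasePos_mem_PosF hq.2 hq.1

end Simulation

section Unraveling

open Term

variable {α : Type u}

/-- `U_opt(R)` is `U(R)` with argument `m + 1` of `U^ρ_{j+1}(t, x⃗)` deleted whenever the
carried variable `xₘ₊₁` lies in `X_{j+1} \ Z_{j+1}`. -/
def UoptDrops (u : ERule α → ℕ → α) (R : Set (ERule α)) (f : α) (i : ℕ) : Prop :=
  ∃ ρ ∈ R, ∃ j < ρ.conds.length, f = u ρ j ∧
    ∃ m x, i = m + 1 ∧ (seqOf (ρ.Xset j))[m]? = some x ∧ x ∉ ρ.Zset j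

theorem seqOf_filter {X Z : Finset ℕ} (h : Z ⊆ X) : (seqOf X).filter (· ∈ Z) = seqOf Z := by
  unfold seqOf
  refine List.Perm.eq_of_pairwise' (r := (· ≤ ·)) ((Finset.pairwise_sort _ _).filter _)
    (Finset.pairwise_sort _ _) ?_
  rw [List.perm_ext_iff_of_nodup ((Finset.sort_nodup _ _).filter _) (Finset.sort_nodup _ _)]
  intro a
  simpa using @h a

theorem mem_varFinset_mkU {x : ℕ} {f : α} {w : Term α} {xs : List ℕ} :
    x ∈ (mkU f w xs).varFinset ↔ x ∈ w.varFinset ∨ x ∈ xs := by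
  simp [mkU, mem_varFinset_app]

namespace ERule

variable (ρ : ERule α) {j : ℕ}

theorem rhs_subset_Yset (j : ℕ) : ρ.rhs.varFinset ⊆ ρ.Yset j := by
  intro x hx
  simp [Yset, hx]

theorem Zset_subset_Yset (j : ℕ) : ρ.Zset j ⊆ ρ.Yset j :=
  Finset.inter_subset_right

theorem Yset_eq_of_succ_lt (hj : j + 1 < ρ.conds.length) :
    ρ.Yset j = ρ.Yset (j + 1) ∪ (ρ.conds.getD j junkPair).2.varFinset ∪
      (ρ.conds.getD (j + 1) junkPair).1.varFinset := by
  ext x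
  simp only [Yset, List.drop_eq_getElem_cons hj, List.getD_eq_getElem _ _ hj, List.map_cons,
    List.foldr_cons, Finset.mem_union]
  tauto

theorem fst_subset_Yset (hj : j + 1 < ρ.conds.length) :
    (ρ.conds.getD (j + 1) junkPair).1.varFinset ⊆ ρ.Yset j :=
  Yset_eq_of_succ_lt ρ hj ▸ Finset.subset_union_right

theorem Yset_succ_subset (hj : j + 1 < ρ.conds.length) : ρ.Yset (j + 1) ⊆ ρ.Yset j :=
  Yset_eq_of_succ_lt ρ hj ▸ Finset.subset_union_left.trans Finset.subset_union_left

end ERule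

variable {F : Set α} {u : ERule α → ℕ → α} {R : Set (ERule α)}

theorem not_uoptDrops_of_mem (hfresh : UFresh F u R) :
    ∀ f ∈ F, ∀ i, ¬ UoptDrops u R f i := by
  rintro f hf i ⟨ρ, hρ, j, hj, rfl, -⟩
  exact hfresh.1 ρ hρ j hj hf

theorem uoptDrops_u_iff (hfresh : UFresh F u R) {ρ : ERule α} (hρ : ρ ∈ R) {j : ℕ}
    (hj : j < ρ.conds.length) {i : ℕ} :
    UoptDrops u R (u ρ j) i ↔
      ∃ m x, i = m + 1 ∧ (seqOf (ρ.Xset j))[m]? = some x ∧ x ∉ ρ.Zset j := by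
  constructor
  · rintro ⟨ρ', hρ', j', hj', heq, hm⟩
    obtain ⟨rfl, rfl⟩ := hfresh.2 ρ' hρ' ρ hρ j' hj' j hj heq.symm
    exact hm
  · exact fun hm => ⟨ρ, hρ, j, hj, rfl, hm⟩

section Carried

variable (hfresh : UFresh F u R) {ρ : ERule α} (hρ : ρ ∈ R) {j : ℕ}
  (hj : j < ρ.conds.length) {w : Term α} (hw : w.overSig F)
include hfresh hρ hj hw

theorem eraseArgs_mkU :
    eraseArgs (UoptDrops u R) (mkU (u ρ j) w (seqOf (ρ.Xset j))) =
      mkU (u ρ j) w (seqOf (ρ.Zset j)) := by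
  have hkeep : (seqOf (ρ.Xset j)).keepIdx (UoptDrops u R (u ρ j)) 1 =
      (seqOf (ρ.Xset j)).filter (· ∈ ρ.Zset j) := by
    refine List.keepIdx_eq_filter fun m hm => ?_
    simp [uoptDrops_u_iff hfresh hρ hj, Nat.add_comm 1 m, List.getElem?_eq_getElem hm]
  rw [mkU, mkU, eraseArgs_app, List.map_cons, List.keepIdx_cons_of_neg, List.map_map,
    eraseArgs_eq_self (not_uoptDrops_of_mem hfresh) hw]
  · simp [Function.comp_def, List.keepIdx_map, hkeep, ERule.Zset,
      ← seqOf_filter (Finset.inter_subset_left (s₁ := ρ.Xset j))]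
  · rw [uoptDrops_u_iff hfresh hρ hj]
    omega

theorem keptPos_mkU {q : Pos} {x : ℕ}
    (h : sub? q (mkU (u ρ j) w (seqOf (ρ.Xset j))) = some (var x)) (hx : x ∈ ρ.Yset j) :
    KeptPos (UoptDrops u R) q (mkU (u ρ j) w (seqOf (ρ.Xset j))) := by
  cases q with
  | nil => trivial
  | cons i q =>
      obtain ⟨f, ts, c, hmk, hc, hq⟩ := sub?_cons_eq_some.1 h
      obtain ⟨rfl, rfl⟩ := Term.app.inj hmk
      refine ⟨?_, c, hc, ?_⟩
      · rw [uoptDrops_u_iff hfresh hρ hj]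
        rintro ⟨m, y, rfl, hy, hyZ⟩
        simp only [List.getElem?_cons_succ, List.getElem?_map, hy, Option.map_some,
          Option.some.injEq] at hc
        subst hc
        cases q with
        | nil =>
            cases hq
            exact hyZ (Finset.mem_inter.2 ⟨by simpa [seqOf] using List.mem_of_getElem? hy, hx⟩)
        | cons _ _ => simp [sub?] at hq
      · cases i with
        | zero =>
            cases hc
            exact keptPos_of_overSig (not_uoptDrops_of_mem hfresh) hw hq
        | succ m =>
            cases q with
            | nil => trivial
            | cons _ _ =>
                obtain ⟨y, -, rfl⟩ := by simpa using hc
                simp [sub?] at hq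

end Carried

theorem erasureSimulates_uSys (hsig : ∀ ρ ∈ R, ρ.overSig F) (hfresh : UFresh F u R) :
    ErasureSimulates (UoptDrops u R) (USys u R) (UoptSys u R) := by
  rintro _ ⟨ρ, hρ, hmem⟩
  obtain ⟨j, hj, rfl⟩ := List.mem_map.1 hmem
  refine ⟨_, ⟨ρ, hρ, List.mem_map_of_mem hj⟩, rfl, ?_⟩
  have hF := not_uoptDrops_of_mem hfresh
  have hcond : ∀ {m}, m < ρ.conds.length →
      (ρ.conds.getD m junkPair).1.overSig F ∧ (ρ.conds.getD m junkPair).2.overSig F :=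
    fun hm => (hsig ρ hρ).2.2 _ (List.getD_eq_getElem _ _ hm ▸ List.getElem_mem hm)
  have hrhs : eraseArgs (UoptDrops u R)
      (if j < ρ.conds.length then mkU (u ρ j) (ρ.conds.getD j junkPair).1 (seqOf (ρ.Xset j))
        else ρ.rhs) =
      if j < ρ.conds.length then mkU (u ρ j) (ρ.conds.getD j junkPair).1 (seqOf (ρ.Zset j))
        else ρ.rhs := by
    split_ifs with hjk
    · exact eraseArgs_mkU hfresh hρ hjk (hcond hjk).1
    · exact eraseArgs_eq_self hF (hsig ρ hρ).2.1
  cases j with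
  | zero =>
      simp only [if_pos]
      exact ⟨eraseArgs_eq_self hF (hsig ρ hρ).1, hrhs,
        fun q x hq _ => keptPos_of_overSig hF (hsig ρ hρ).1 hq⟩
  | succ j =>
      have hj : j < ρ.conds.length := by simp at hj; omega
      simp only [Nat.add_one_ne_zero, if_false, Nat.add_sub_cancel]
      refine ⟨eraseArgs_mkU hfresh hρ hj (hcond hj).2, hrhs, fun q x hq hx => ?_⟩
      refine keptPos_mkU hfresh hρ hj (hcond hj).2 hq ?_
      split_ifs at hx with hjk
      · rcases mem_varFinset_mkU.1 hx with hx | hx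
        · exact ρ.fst_subset_Yset hjk hx
        · have hx : x ∈ ρ.Zset (j + 1) := by simpa [seqOf] using hx
          exact ρ.Yset_succ_subset hjk (ρ.Zset_subset_Yset _ hx)
      · exact ρ.rhs_subset_Yset j hx

end Unraveling

theorem u_sound_of_uopt_sound_general {α : Type u} (F : Set α) (R : Set (ERule α))
    (u : ERule α → ℕ → α)
    (hsig : ∀ ρ ∈ R, ρ.overSig F)
    (hfresh : UFresh F u R) :
    ((∀ s t : Term α, s.overSig F → t.overSig F →
        RedStar (UoptSys u R) s t → RedStar R s t) →
      (∀ s t : Term α, s.overSig F → t.overSig F →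
        RedStar (USys u R) s t → RedStar R s t)) ∧
    ((∀ s t : Term α, s.overSig F → t.overSig F →
        EVSafe (UoptSys u R) s t → RedStar R s t) →
      (∀ s t : Term α, s.overSig F → t.overSig F →
        EVSafe (USys u R) s t → RedStar R s t)) := by
  have hsim := erasureSimulates_uSys hsig hfresh
  have hfix : ∀ {t : Term α}, t.overSig F → Term.eraseArgs (UoptDrops u R) t = t :=
    Term.eraseArgs_eq_self (not_uoptDrops_of_mem hfresh)
  refine ⟨fun hopt s t hs ht h => hopt s t hs ht ?_, fun hopt s t hs ht h => hopt s t hs ht ?_⟩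
  · simpa only [hfix hs, hfix ht] using hsim.redStar h
  · simpa only [hfix hs, hfix ht] using hsim.evSafe h

/-- Let `R` be an eDCTRS over a signature `F`. If the optimized
unraveling `U_opt` is sound for `R`, then Ohlebusch's unraveling `U` is sound for
`R`; likewise, if `U_opt` is sound for `R` w.r.t. EV-safe reduction, then so
is `U`. -/
theorem u_sound_of_uopt_sound {α : Type u} (F : Set α) (R : Set (ERule α))
    (u : ERule α → ℕ → α)
    (hdet : ∀ ρ ∈ R, ρ.Det)
    (hsig : ∀ ρ ∈ R, ρ.overSig F)
    (hfresh : UFresh F u R) :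
    ((∀ s t : Term α, s.overSig F → t.overSig F →
        RedStar (UoptSys u R) s t → RedStar R s t) →
      (∀ s t : Term α, s.overSig F → t.overSig F →
        RedStar (USys u R) s t → RedStar R s t)) ∧
    ((∀ s t : Term α, s.overSig F → t.overSig F →
        EVSafe (UoptSys u R) s t → RedStar R s t) →
      (∀ s t : Term α, s.overSig F → t.overSig F →
        EVSafe (USys u R) s t → RedStar R s t)) :=
  u_sound_of_uopt_sound_general F R u hsig hfresh
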